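/- arXiv:math-ph/9812024 — 2 statements merged into one kernel-verified Lean document; each statement's English description precedes it below -/
import Mathlib

section
/- Let ℵ : [0,∞) → ℝ be C² with bounded first and second derivatives and ℵ(0) > 0. Let s_ζ denote the unique positive zero of ℵ(s) − ζ s for large ζ. Then s_ζ = ℵ(0)/(ζ − ℵ'(0)) + O(1/ζ³) as ζ → ∞. -/
open Filter Asymptotics Set

/-!
Substituting `ℵ(s) = ℵ(0) + ℵ'(0) s + O(s²)` into `ℵ(s) = ζ s` gives
`s - ℵ(0)/(ζ - ℵ'(0)) = O(s²)/(ζ - ℵ'(0))`, and `s = ℵ(s)/ζ = O(1/ζ)` makes this `O(1/ζ³)`.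
-/

theorem abs_sub_sub_deriv_mul_le_of_Icc {f f' f'' : ℝ → ℝ} {a b C : ℝ} (hab : a ≤ b)
    (hf : ∀ x ∈ Icc a b, HasDerivWithinAt f (f' x) (Icc a b) x)
    (hf' : ∀ x ∈ Icc a b, HasDerivWithinAt f' (f'' x) (Icc a b) x)
    (hf'' : ∀ x ∈ Icc a b, |f'' x| ≤ C) :
    |f b - f a - f' a * (b - a)| ≤ C * (b - a) ^ 2 := by
  have ha : a ∈ Icc a b := left_mem_Icc.2 hab
  have hC : 0 ≤ C := (abs_nonneg _).trans (hf'' a ha)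
  have hderiv_bound : ∀ x ∈ Icc a b, ‖f' x - f' a‖ ≤ C * (b - a) := fun x hx => by
    calc ‖f' x - f' a‖ ≤ C * ‖x - a‖ :=
          (convex_Icc a b).norm_image_sub_le_of_norm_hasDerivWithin_le hf' hf'' ha hx
      _ ≤ C * (b - a) := by
          rw [Real.norm_of_nonneg (sub_nonneg.2 hx.1)]
          exact mul_le_mul_of_nonneg_left (by linarith [hx.2]) hC
  have hg : ∀ x ∈ Icc a b,
      HasDerivWithinAt (fun y => f y - f' a * y) (f' x - f' a) (Icc a b) x := fun x hx => by
    simpa using (hf x hx).fun_sub ((hasDerivWithinAt_id x _).const_mul (f' a))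
  have := (convex_Icc a b).norm_image_sub_le_of_norm_hasDerivWithin_le hg hderiv_bound ha
    (right_mem_Icc.2 hab)
  rw [Real.norm_eq_abs, Real.norm_of_nonneg (sub_nonneg.2 hab)] at this
  calc |f b - f a - f' a * (b - a)| = |f b - f' a * b - (f a - f' a * a)| := by ring_nf
    _ ≤ C * (b - a) * (b - a) := this
    _ = C * (b - a) ^ 2 := by ring

theorem abs_sub_div_le_of_eq_mul {f f' f'' : ℝ → ℝ} {M ζ s : ℝ}
    (hf : ∀ x ∈ Ici (0 : ℝ), HasDerivWithinAt f (f' x) (Ici 0) x)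
    (hf' : ∀ x ∈ Ici (0 : ℝ), HasDerivWithinAt f' (f'' x) (Ici 0) x)
    (hf''_le : ∀ x ∈ Ici (0 : ℝ), |f'' x| ≤ M) (hf'_le : |f' 0| ≤ M)
    (hζ : 2 * M ≤ ζ) (hζ_pos : 0 < ζ) (hs : 0 ≤ s) (hfs_le : f s ≤ M) (hfs : f s = ζ * s) :
    |s - f 0 / (ζ - f' 0)| ≤ 2 * M ^ 3 / ζ ^ 3 := by
  have hM : 0 ≤ M := (abs_nonneg _).trans hf'_le
  have hs_le : s ≤ M / ζ := by
    rw [le_div_iff₀ hζ_pos]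
    linarith
  have hIcc : Icc 0 s ⊆ Ici 0 := fun x hx => hx.1
  have htaylor : |f s - f 0 - f' 0 * s| ≤ M * s ^ 2 := by
    simpa using abs_sub_sub_deriv_mul_le_of_Icc hs
      (fun x hx => (hf x (hIcc hx)).mono hIcc) (fun x hx => (hf' x (hIcc hx)).mono hIcc)
      (fun x hx => hf''_le x (hIcc hx))
  have hden : ζ / 2 ≤ ζ - f' 0 := by linarith [(abs_le.1 hf'_le).2]
  have hden_pos : 0 < ζ - f' 0 := by linarith
  have hkey : s - f 0 / (ζ - f' 0) = (f s - f 0 - f' 0 * s) / (ζ - f' 0) := by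
    rw [hfs]
    field_simp
    ring
  have hnum : |f s - f 0 - f' 0 * s| ≤ M * (M / ζ) ^ 2 :=
    htaylor.trans (mul_le_mul_of_nonneg_left (pow_le_pow_left₀ hs hs_le 2) hM)
  calc |s - f 0 / (ζ - f' 0)| = |f s - f 0 - f' 0 * s| / (ζ - f' 0) := by
        rw [hkey, abs_div, abs_of_pos hden_pos]
    _ ≤ M * (M / ζ) ^ 2 / (ζ / 2) := div_le_div₀ (by positivity) hnum (by positivity) hden
    _ = 2 * M ^ 3 / ζ ^ 3 := by field_simp

theorem stmt_6_general (aleph aleph' aleph'' : ℝ → ℝ) (M ζ₀ : ℝ) (z : ℝ → ℝ)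
    (hderiv1 : ∀ s ∈ Set.Ici (0:ℝ), HasDerivWithinAt aleph (aleph' s) (Set.Ici 0) s)
    (hderiv2 : ∀ s ∈ Set.Ici (0:ℝ), HasDerivWithinAt aleph' (aleph'' s) (Set.Ici 0) s)
    (hb0 : ∀ s ∈ Set.Ici (0:ℝ), |aleph s| ≤ M)
    (hb1 : ∀ s ∈ Set.Ici (0:ℝ), |aleph' s| ≤ M)
    (hb2 : ∀ s ∈ Set.Ici (0:ℝ), |aleph'' s| ≤ M)
    (hz : ∀ ζ ≥ ζ₀, 0 < z ζ ∧ aleph (z ζ) = ζ * z ζ) :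
    (fun ζ => z ζ - aleph 0 / (ζ - aleph' 0)) =O[atTop] fun ζ => 1 / ζ ^ 3 := by
  refine isBigO_iff.2 ⟨2 * M ^ 3, ?_⟩
  filter_upwards [eventually_ge_atTop ζ₀, eventually_ge_atTop (2 * M), eventually_gt_atTop 0]
    with ζ hζ₀ hζM hζ_pos
  obtain ⟨hz_pos, hz_eq⟩ := hz ζ hζ₀
  have hz_le : aleph (z ζ) ≤ M := (le_abs_self _).trans (hb0 _ hz_pos.le)
  rw [Real.norm_eq_abs, Real.norm_of_nonneg (by positivity), ← mul_div_assoc, mul_one]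
  exact abs_sub_div_le_of_eq_mul hderiv1 hderiv2 hb2 (hb1 0 self_mem_Ici) hζM hζ_pos
    hz_pos.le hz_le hz_eq

/-- If `ℵ` is `C²` on `[0,∞)` with bounded first and second derivatives and
`ℵ(0) > 0`, and `z ζ` denotes the unique positive zero of `ℵ(s) - ζ s` for large
`ζ`, then `z ζ = ℵ(0)/(ζ - ℵ'(0)) + O(1/ζ³)` as `ζ → ∞`. -/
theorem stmt_6 (aleph aleph' aleph'' : ℝ → ℝ) (M ζ₀ : ℝ) (z : ℝ → ℝ)
    (hderiv1 : ∀ s ∈ Set.Ici (0:ℝ), HasDerivWithinAt aleph (aleph' s) (Set.Ici 0) s)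
    (hderiv2 : ∀ s ∈ Set.Ici (0:ℝ), HasDerivWithinAt aleph' (aleph'' s) (Set.Ici 0) s)
    (hcont : ContinuousOn aleph'' (Set.Ici 0))
    (hb0 : ∀ s ∈ Set.Ici (0:ℝ), |aleph s| ≤ M)
    (hb1 : ∀ s ∈ Set.Ici (0:ℝ), |aleph' s| ≤ M)
    (hb2 : ∀ s ∈ Set.Ici (0:ℝ), |aleph'' s| ≤ M)
    (hpos : 0 < aleph 0)
    (hζ₀ : M < ζ₀)
    (hz : ∀ ζ ≥ ζ₀, 0 < z ζ ∧ aleph (z ζ) = ζ * z ζ) :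
    (fun ζ => z ζ - aleph 0 / (ζ - aleph' 0)) =O[atTop] fun ζ => 1 / ζ ^ 3 :=
  stmt_6_general aleph aleph' aleph'' M ζ₀ z hderiv1 hderiv2 hb0 hb1 hb2 hz
end

section
/- Let μ, β, α > 0 with μ < 1 + 2α, and suppose u_K ≍ K^{−β} and S_K := Σ_{k=1}^K τ(k)^{1/(1+2α)} ≍ K^{1−μ/(1+2α)} where τ(k) ≍ k^{−μ}. Define K(ε) as the greatest integer K with u_K / S_K ≥ ε^{1/(1+2α)}. Then there are constants such that u_{K(ε)} ≍ ε^{β/((β+1)(1+2α)−μ)} as ε → 0. -/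
lemma aux_mul_rpow {a b : ℝ} (ha : 0 < a) (hb : 0 < b) (s t : ℝ) :
    (a * b ^ s) ^ t = a ^ t * b ^ (s * t) := by
  rw [Real.mul_rpow ha.le (Real.rpow_pos_of_pos hb s).le, ← Real.rpow_mul hb.le]

/-- With power-law sequences `u_K ≍ K^{-β}`, `τ(k) ≍ k^{-μ}`,
`S_K = Σ_{k=1}^K τ(k)^{1/(1+2α)} ≍ K^{1-μ/(1+2α)}` (`μ < 1+2α`), and `K(ε)` the
greatest `K` with `u_K / S_K ≥ ε^{1/(1+2α)}`, one has
`u_{K(ε)} ≍ ε^{β/((β+1)(1+2α)-μ)}` as `ε → 0`. -/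
theorem stmt_12 (τ u S : ℕ → ℝ) (μ β α c₁ c₂ : ℝ) (Kfun : ℝ → ℕ)
    (hα : 0 < α) (hβ : 0 < β) (hμ0 : 0 < μ) (hμ : μ < 1 + 2 * α)
    (hc₁ : 0 < c₁) (hc : c₁ < c₂)
    (hτ : ∀ k : ℕ, 1 ≤ k →
      c₁ * (k : ℝ) ^ (-μ) ≤ τ k ∧ τ k ≤ c₂ * (k : ℝ) ^ (-μ))
    (hu : ∀ K : ℕ, 1 ≤ K →
      c₁ * (K : ℝ) ^ (-β) ≤ u K ∧ u K ≤ c₂ * (K : ℝ) ^ (-β))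
    (hS : ∀ K : ℕ, S K = ∑ k ∈ Finset.Icc 1 K, τ k ^ (1 / (1 + 2 * α)))
    (hSasymp : ∀ K : ℕ, 1 ≤ K →
      c₁ * (K : ℝ) ^ (1 - μ / (1 + 2 * α)) ≤ S K ∧
        S K ≤ c₂ * (K : ℝ) ^ (1 - μ / (1 + 2 * α)))
    (hKfun : ∀ ε : ℝ, 0 < ε → ε < 1 →
      1 ≤ Kfun ε ∧ ε ^ (1 / (1 + 2 * α)) ≤ u (Kfun ε) / S (Kfun ε) ∧
        ∀ K : ℕ, Kfun ε < K → u K / S K < ε ^ (1 / (1 + 2 * α))) :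
    ∃ d₁ d₂ ε₀ : ℝ, 0 < d₁ ∧ d₁ < d₂ ∧ 0 < ε₀ ∧
      ∀ ε : ℝ, 0 < ε → ε < ε₀ →
        d₁ * ε ^ (β / ((β + 1) * (1 + 2 * α) - μ)) ≤ u (Kfun ε) ∧
          u (Kfun ε) ≤ d₂ * ε ^ (β / ((β + 1) * (1 + 2 * α) - μ)) := by
  set γ : ℝ := 1 + 2 * α with hγdef
  have hγ : 0 < γ := by positivity
  set q : ℝ := (β + 1) * (1 + 2 * α) - μ with hqdef
  have hq : 0 < q := by nlinarith
  set t : ℝ := β * γ / q with htdef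
  have ht : 0 < t := by positivity
  have hc₂ : 0 < c₂ := hc₁.trans hc
  have hcc : 1 < c₂ / c₁ := (one_lt_div hc₁).mpr hc
  set r : ℝ := (c₂ / c₁) ^ t with hrdef
  have hr0 : 0 < r := Real.rpow_pos_of_pos (by positivity) t
  have hr1 : 1 ≤ r := Real.one_le_rpow hcc.le ht.le
  have h2β : (1 : ℝ) ≤ (2 : ℝ) ^ β := Real.one_le_rpow (by norm_num) hβ.le
  refine ⟨c₁ / r, c₂ * 2 ^ β * r, 1, by positivity, ?_, one_pos, ?_⟩
  · have h1 : c₁ / r ≤ c₁ := by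
      rw [div_le_iff₀ hr0]; nlinarith
    have h2 : c₂ * 1 * 1 ≤ c₂ * 2 ^ β * r := by gcongr
    simp only [mul_one] at h2
    linarith
  intro ε hε hε1
  obtain ⟨hK1, hge, hlt⟩ := hKfun ε hε hε1
  set K : ℕ := Kfun ε with hKdef
  have hKR : (1 : ℝ) ≤ (K : ℝ) := by exact_mod_cast hK1
  have hKpos : (0 : ℝ) < (K : ℝ) := lt_of_lt_of_le one_pos hKR
  obtain ⟨huK1, huK2⟩ := hu K hK1
  obtain ⟨hSK1, hSK2⟩ := hSasymp K hK1
  have hSpos : 0 < S K :=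
    lt_of_lt_of_le (by positivity) hSK1
  have hupos : 0 < u K := lt_of_lt_of_le (by positivity) huK1
  -- exponent identities
  have hexp1 : (-β - (1 - μ / γ)) = -(q / γ) := by
    field_simp; ring
  have hexp2 : (1 / γ) * t = β / q := by
    rw [htdef]; field_simp; try ring
  have hexp3 : (-(q / γ)) * t = -β := by
    rw [htdef]; field_simp; try ring
  -- Lower bound
  have step1 : u K / S K ≤ (c₂ / c₁) * (K : ℝ) ^ (-(q / γ)) := by
    have h1 : u K / S K ≤ (c₂ * (K : ℝ) ^ (-β)) / (c₁ * (K : ℝ) ^ (1 - μ / γ)) :=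
      div_le_div₀ (by positivity) huK2 (by positivity) hSK1
    calc u K / S K ≤ (c₂ * (K : ℝ) ^ (-β)) / (c₁ * (K : ℝ) ^ (1 - μ / γ)) := h1
      _ = (c₂ / c₁) * ((K : ℝ) ^ (-β) / (K : ℝ) ^ (1 - μ / γ)) := by ring
      _ = (c₂ / c₁) * (K : ℝ) ^ (-(q / γ)) := by
          rw [← Real.rpow_sub hKpos, hexp1]
  have step2 : ε ^ (1 / γ) ≤ (c₂ / c₁) * (K : ℝ) ^ (-(q / γ)) := hge.trans step1
  have step3 : ε ^ (β / q) ≤ r * (K : ℝ) ^ (-β) := by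
    have := Real.rpow_le_rpow (Real.rpow_nonneg hε.le _) step2 ht.le
    rwa [← Real.rpow_mul hε.le, hexp2, aux_mul_rpow (by positivity) hKpos, hexp3] at this
  have lower : c₁ / r * ε ^ (β / q) ≤ u K := by
    calc c₁ / r * ε ^ (β / q) ≤ c₁ / r * (r * (K : ℝ) ^ (-β)) := by
          exact mul_le_mul_of_nonneg_left step3 (by positivity)
      _ = c₁ * (K : ℝ) ^ (-β) := by field_simp
      _ ≤ u K := huK1
  -- Upper bound
  have hK1R : (0 : ℝ) < ((K + 1 : ℕ) : ℝ) := by positivity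
  obtain ⟨huK1', _⟩ := hu (K + 1) (by omega)
  obtain ⟨_, hSK2'⟩ := hSasymp (K + 1) (by omega)
  have hSpos' : 0 < S (K + 1) :=
    lt_of_lt_of_le (by positivity) (hSasymp (K + 1) (by omega)).1
  have hlt' : u (K + 1) / S (K + 1) < ε ^ (1 / γ) := hlt (K + 1) (Nat.lt_succ_self K)
  have hup' : 0 < u (K + 1) := lt_of_lt_of_le (by positivity) huK1'
  have step1' : (c₁ / c₂) * ((K + 1 : ℕ) : ℝ) ^ (-(q / γ)) ≤ u (K + 1) / S (K + 1) := by
    have h1 : (c₁ * ((K + 1 : ℕ) : ℝ) ^ (-β)) / (c₂ * ((K + 1 : ℕ) : ℝ) ^ (1 - μ / γ))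
        ≤ u (K + 1) / S (K + 1) :=
      div_le_div₀ hup'.le huK1' hSpos' hSK2'
    calc (c₁ / c₂) * ((K + 1 : ℕ) : ℝ) ^ (-(q / γ))
        = (c₁ / c₂) * (((K + 1 : ℕ) : ℝ) ^ (-β) / ((K + 1 : ℕ) : ℝ) ^ (1 - μ / γ)) := by
          rw [← Real.rpow_sub hK1R, hexp1]
      _ = (c₁ * ((K + 1 : ℕ) : ℝ) ^ (-β)) / (c₂ * ((K + 1 : ℕ) : ℝ) ^ (1 - μ / γ)) := by ring
      _ ≤ u (K + 1) / S (K + 1) := h1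
  have step2' : (c₁ / c₂) * ((K + 1 : ℕ) : ℝ) ^ (-(q / γ)) ≤ ε ^ (1 / γ) :=
    step1'.trans hlt'.le
  have step3' : ((K + 1 : ℕ) : ℝ) ^ (-β) ≤ r * ε ^ (β / q) := by
    have h := Real.rpow_le_rpow (by positivity) step2' ht.le
    rw [aux_mul_rpow (by positivity) hK1R, hexp3, ← Real.rpow_mul hε.le, hexp2] at h
    have hinv : (c₁ / c₂) ^ t = r⁻¹ := by
      show (c₁ / c₂) ^ t = ((c₂ / c₁) ^ t)⁻¹
      rw [← Real.inv_rpow (by positivity : (0:ℝ) ≤ c₂ / c₁), inv_div]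
    rw [hinv] at h
    calc ((K + 1 : ℕ) : ℝ) ^ (-β) = r * (r⁻¹ * ((K + 1 : ℕ) : ℝ) ^ (-β)) := by
          field_simp
      _ ≤ r * ε ^ (β / q) := mul_le_mul_of_nonneg_left h hr0.le
  have half : (K : ℝ) ^ (-β) ≤ (2 : ℝ) ^ β * ((K + 1 : ℕ) : ℝ) ^ (-β) := by
    have hhalf : ((K + 1 : ℕ) : ℝ) / 2 ≤ (K : ℝ) := by
      push_cast; linarith
    have h1 : (K : ℝ) ^ (-β) ≤ (((K + 1 : ℕ) : ℝ) / 2) ^ (-β) :=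
      Real.rpow_le_rpow_of_nonpos (by positivity) hhalf (by linarith)
    calc (K : ℝ) ^ (-β) ≤ (((K + 1 : ℕ) : ℝ) / 2) ^ (-β) := h1
      _ = ((K + 1 : ℕ) : ℝ) ^ (-β) / (2 : ℝ) ^ (-β) := Real.div_rpow (by positivity) (by norm_num) _
      _ = (2 : ℝ) ^ β * ((K + 1 : ℕ) : ℝ) ^ (-β) := by
          rw [Real.rpow_neg (by norm_num : (0:ℝ) ≤ 2), div_eq_mul_inv, inv_inv, mul_comm]
  have upper : u K ≤ c₂ * 2 ^ β * r * ε ^ (β / q) := by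
    calc u K ≤ c₂ * (K : ℝ) ^ (-β) := huK2
      _ ≤ c₂ * ((2 : ℝ) ^ β * ((K + 1 : ℕ) : ℝ) ^ (-β)) :=
          mul_le_mul_of_nonneg_left half hc₂.le
      _ ≤ c₂ * ((2 : ℝ) ^ β * (r * ε ^ (β / q))) := by
          have := mul_le_mul_of_nonneg_left step3' (by positivity : (0:ℝ) ≤ (2:ℝ) ^ β)
          exact mul_le_mul_of_nonneg_left this hc₂.le
      _ = c₂ * 2 ^ β * r * ε ^ (β / q) := by ring
  exact ⟨lower, upper⟩
end
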